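/- arXiv:2506.06134 — 7 statements merged into one kernel-verified Lean document; each statement's English description precedes it below -/
import Mathlib

section
/- Fix T ≥ 1, X ∈ ℝ^{n×T} with C_X = (1/T)XXᵀ positive definite, and W ∈ ℝ^{m×n} of full row rank m (with m ≤ n). Then the function S₂(M) = 2‖W‖_F² − ‖M‖_F² − 2 tr(M⁻¹ W C_X Wᵀ), defined on the convex set of symmetric positive definite m×m matrices, is strongly concave with parameter ν = 2: for all symmetric positive definite M₁, M₂ and all α ∈ [0,1], S₂(αM₁ + (1−α)M₂) ≥ αS₂(M₁) + (1−α)S₂(M₂) + (2/2)·α(1−α)·‖M₁ − M₂‖_F². -/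
/-!
For `M` positive definite, `tr(Nᵀ M⁻¹ N) = max_Y (2 tr(Nᵀ Y) - tr(Yᵀ M Y))`, the maximum
being attained at `Y = M⁻¹ N` (the gap is `tr(Dᵀ M D) ≥ 0` for `D = M⁻¹ N - Y`). As a
pointwise maximum of affine functions of `M`, `M ↦ tr(M⁻¹ A)` is convex for every
`A = N Nᵀ ⪰ 0`, in particular for `A = W C Wᵀ`. The remaining term `-‖M‖_F²` is exactly
`2`-strongly concave, by `‖αA + (1-α)B‖² = α‖A‖² + (1-α)‖B‖² - α(1-α)‖A - B‖²`.
-/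

open Matrix

/-- Squared Frobenius norm `‖A‖_F² = tr(AᵀA)`. -/
noncomputable def frobSq {k l : ℕ} (A : Matrix (Fin k) (Fin l) ℝ) : ℝ := (Aᵀ * A).trace

namespace Matrix

variable {ι κ : Type*}

theorem convex_setOf_posDef : Convex ℝ {M : Matrix ι ι ℝ | M.PosDef} :=
  convex_iff_pairwise_pos.mpr fun _ h₁ _ h₂ _ _ _ ha hb _ => (h₁.smul ha).add (h₂.smul hb)

variable [Fintype ι] [Fintype κ]

theorem trace_transpose_mul_comm (A B : Matrix ι κ ℝ) : (Aᵀ * B).trace = (Bᵀ * A).trace := by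
  rw [← trace_transpose, transpose_mul, transpose_transpose]

variable [DecidableEq ι]

open scoped MatrixOrder in
theorem PosSemidef.exists_eq_transpose_mul_self {A : Matrix ι ι ℝ} (hA : A.PosSemidef) :
    ∃ B : Matrix ι ι ℝ, A = Bᵀ * B :=
  CStarAlgebra.nonneg_iff_eq_star_mul_self.mp hA.nonneg

theorem PosDef.two_mul_trace_sub_le_trace_inv {M : Matrix ι ι ℝ} (hM : M.PosDef)
    (N Y : Matrix ι κ ℝ) :
    2 * (Nᵀ * Y).trace - (Yᵀ * M * Y).trace ≤ (Nᵀ * M⁻¹ * N).trace := by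
  have hMT : Mᵀ = M := hM.isHermitian.eq
  have hunit : IsUnit M.det := hM.isUnit.map detMonoidHom
  set D := M⁻¹ * N - Y
  have hD : 0 ≤ (Dᵀ * M * D).trace := by
    simpa using (hM.posSemidef.conjTranspose_mul_mul_same D).trace_nonneg
  have expand : Dᵀ * M * D = Nᵀ * M⁻¹ * N - Nᵀ * Y - Yᵀ * N + Yᵀ * M * Y := by
    simp only [D, transpose_sub, transpose_mul, transpose_nonsing_inv, hMT, Matrix.sub_mul,
      Matrix.mul_sub, Matrix.mul_assoc, mul_nonsing_inv_cancel_left _ _ hunit,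
      nonsing_inv_mul_cancel_left _ _ hunit]
    abel
  rw [expand, trace_add, trace_sub, trace_sub, trace_transpose_mul_comm Y N] at hD
  linarith

theorem PosDef.two_mul_trace_sub_eq_trace_inv {M : Matrix ι ι ℝ} (hM : M.PosDef)
    (N : Matrix ι κ ℝ) :
    2 * (Nᵀ * (M⁻¹ * N)).trace - ((M⁻¹ * N)ᵀ * M * (M⁻¹ * N)).trace =
      (Nᵀ * M⁻¹ * N).trace := by
  have hunit : IsUnit M.det := hM.isUnit.map detMonoidHom
  rw [Matrix.mul_assoc _ M, mul_nonsing_inv_cancel_left _ _ hunit, trace_transpose_mul_comm _ N,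
    Matrix.mul_assoc]
  ring

theorem convexOn_trace_transpose_mul_inv_mul (N : Matrix ι κ ℝ) :
    ConvexOn ℝ {M : Matrix ι ι ℝ | M.PosDef} fun M => (Nᵀ * M⁻¹ * N).trace := by
  refine convexOn_iff_forall_pos.mpr ⟨convex_setOf_posDef, fun M₁ h₁ M₂ h₂ a b ha hb hab => ?_⟩
  set M := a • M₁ + b • M₂
  set Y := M⁻¹ * N
  have hM : M.PosDef := (h₁.smul ha).add (h₂.smul hb)
  calc (Nᵀ * M⁻¹ * N).trace = 2 * (Nᵀ * Y).trace - (Yᵀ * M * Y).trace :=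
        (hM.two_mul_trace_sub_eq_trace_inv N).symm
    _ = a * (2 * (Nᵀ * Y).trace - (Yᵀ * M₁ * Y).trace)
          + b * (2 * (Nᵀ * Y).trace - (Yᵀ * M₂ * Y).trace) := by
        simp only [M, Matrix.mul_add, Matrix.add_mul, Matrix.mul_smul, Matrix.smul_mul,
          trace_add, trace_smul, smul_eq_mul]
        linear_combination (-2 * (Nᵀ * Y).trace) * hab
    _ ≤ a * (Nᵀ * M₁⁻¹ * N).trace + b * (Nᵀ * M₂⁻¹ * N).trace := by
        gcongr
        exacts [h₁.two_mul_trace_sub_le_trace_inv N Y, h₂.two_mul_trace_sub_le_trace_inv N Y]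

theorem convexOn_trace_inv_mul {A : Matrix ι ι ℝ} (hA : A.PosSemidef) :
    ConvexOn ℝ {M : Matrix ι ι ℝ | M.PosDef} fun M => (M⁻¹ * A).trace := by
  obtain ⟨B, rfl⟩ := hA.exists_eq_transpose_mul_self
  simpa only [← Matrix.mul_assoc, trace_mul_cycle (B := Bᵀ), transpose_transpose]
    using convexOn_trace_transpose_mul_inv_mul Bᵀ

end Matrix

theorem frobSq_smul_add_one_sub_smul {k l : ℕ} (A B : Matrix (Fin k) (Fin l) ℝ) (α : ℝ) :
    frobSq (α • A + (1 - α) • B)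
      = α * frobSq A + (1 - α) * frobSq B - α * (1 - α) * frobSq (A - B) := by
  simp only [frobSq, transpose_add, transpose_sub, transpose_smul, Matrix.add_mul, Matrix.mul_add,
    Matrix.sub_mul, Matrix.mul_sub, Matrix.smul_mul, Matrix.mul_smul, trace_add, trace_sub,
    trace_smul, smul_eq_mul, trace_transpose_mul_comm B A]
  ring

theorem S2_strongly_concave_general
    {n m : ℕ}
    (C : Matrix (Fin n) (Fin n) ℝ) (hCpd : C.PosDef)
    (W : Matrix (Fin m) (Fin n) ℝ)
    (S₂ : Matrix (Fin m) (Fin m) ℝ → ℝ)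
    (hS₂ : ∀ M, S₂ M = 2 * frobSq W - frobSq M - 2 * (M⁻¹ * (W * C * Wᵀ)).trace) :
    ∀ M₁ M₂ : Matrix (Fin m) (Fin m) ℝ, M₁.PosDef → M₂.PosDef →
      ∀ α : ℝ, α ∈ Set.Icc (0 : ℝ) 1 →
        α * S₂ M₁ + (1 - α) * S₂ M₂ + (2 / 2) * α * (1 - α) * frobSq (M₁ - M₂) ≤
          S₂ (α • M₁ + (1 - α) • M₂) := by
  intro M₁ M₂ h₁ h₂ α ⟨hα₀, hα₁⟩
  have hA : (W * C * Wᵀ).PosSemidef := hCpd.posSemidef.mul_mul_conjTranspose_same W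
  have hconv :=
    (convexOn_trace_inv_mul hA).2 h₁ h₂ hα₀ (sub_nonneg.mpr hα₁) (add_sub_cancel α 1)
  simp only [smul_eq_mul] at hconv
  rw [hS₂, hS₂, hS₂, frobSq_smul_add_one_sub_smul]
  linarith

/-- strong concavity (with parameter 2) of the second-level cost
`S₂(M) = 2‖W‖_F² − ‖M‖_F² − 2 tr(M⁻¹ W C_X Wᵀ)` on positive definite matrices. -/
theorem S2_strongly_concave
    {n T m : ℕ} (hT : 1 ≤ T) (hmn : m ≤ n)
    (X : Matrix (Fin n) (Fin T) ℝ)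
    (C : Matrix (Fin n) (Fin n) ℝ) (hC : C = (T : ℝ)⁻¹ • (X * Xᵀ)) (hCpd : C.PosDef)
    (W : Matrix (Fin m) (Fin n) ℝ) (hW : W.rank = m)
    (S₂ : Matrix (Fin m) (Fin m) ℝ → ℝ)
    (hS₂ : ∀ M, S₂ M = 2 * frobSq W - frobSq M - 2 * (M⁻¹ * (W * C * Wᵀ)).trace) :
    ∀ M₁ M₂ : Matrix (Fin m) (Fin m) ℝ, M₁.PosDef → M₂.PosDef →
      ∀ α : ℝ, α ∈ Set.Icc (0 : ℝ) 1 →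
        α * S₂ M₁ + (1 - α) * S₂ M₂ + (2 / 2) * α * (1 - α) * frobSq (M₁ - M₂) ≤
          S₂ (α • M₁ + (1 - α) • M₂) :=
  S2_strongly_concave_general C hCpd W S₂ hS₂
end

section
/- Fix T ≥ 1, X ∈ ℝ^{n×T} with C_X = (1/T)XXᵀ positive definite, and W ∈ ℝ^{m×n} of full row rank m (with m ≤ n). Let M⋆ be a symmetric positive definite m×m matrix satisfying (M⋆)³ = W C_X Wᵀ. Then M⋆ is the unique global maximizer of S₂(M) = 2‖W‖_F² − ‖M‖_F² − 2 tr(M⁻¹ W C_X Wᵀ) over symmetric positive definite m×m matrices: for every symmetric positive definite M, S₂(M) ≤ S₂(M⋆), with equality if and only if M = M⋆. -/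
/-! Write `Q = M⋆`, so that `W C_X Wᵀ = Q³`. Expanding `(M - Q) Q (M - Q)` gives, for symmetric
invertible `M`, the identity
`S₂(Q) - S₂(M) = ‖M - Q‖_F² + 2 tr(M⁻¹ (M - Q) Q (M - Q))`.
The trace is that of a product of two positive semidefinite matrices, hence nonnegative, so the
gap is nonnegative and vanishes only when `‖M - Q‖_F = 0`. -/

open Matrix

open scoped ComplexOrder MatrixOrder in
theorem Matrix.PosSemidef.trace_mul_nonneg {n 𝕜 : Type*} [Fintype n] [DecidableEq n] [RCLike 𝕜]
    {A B : Matrix n n 𝕜} (hA : A.PosSemidef) (hB : B.PosSemidef) : 0 ≤ (A * B).trace := by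
  obtain ⟨D, rfl⟩ := CStarAlgebra.nonneg_iff_eq_star_mul_self.mp hB.nonneg
  rw [← Matrix.mul_assoc, trace_mul_comm]
  simpa [Matrix.mul_assoc, star_eq_conjTranspose] using
    (hA.mul_mul_conjTranspose_same D).trace_nonneg

theorem frobSq_nonneg {k l : ℕ} (A : Matrix (Fin k) (Fin l) ℝ) : 0 ≤ frobSq A := by
  simpa [frobSq] using (posSemidef_conjTranspose_mul_self A).trace_nonneg

theorem frobSq_eq_zero_iff {k l : ℕ} {A : Matrix (Fin k) (Fin l) ℝ} : frobSq A = 0 ↔ A = 0 := by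
  simpa [frobSq] using trace_conjTranspose_mul_self_eq_zero_iff (A := A)

theorem Matrix.IsSymm.frobSq_eq {m : ℕ} {A : Matrix (Fin m) (Fin m) ℝ} (hA : A.IsSymm) :
    frobSq A = (A * A).trace := by
  rw [frobSq, hA.eq]

theorem frobSq_sub_of_isSymm {m : ℕ} {P Q : Matrix (Fin m) (Fin m) ℝ} (hP : P.IsSymm)
    (hQ : Q.IsSymm) : frobSq (P - Q) = frobSq P - 2 * (Q * P).trace + frobSq Q := by
  rw [(hP.sub hQ).frobSq_eq, hP.frobSq_eq, hQ.frobSq_eq,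
    show (P - Q) * (P - Q) = P * P - P * Q - Q * P + Q * Q by noncomm_ring,
    trace_add, trace_sub, trace_sub, trace_mul_comm P Q]
  ring

theorem trace_inv_mul_sub_mul_mul_sub {m : ℕ} {P Q : Matrix (Fin m) (Fin m) ℝ}
    (hP : IsUnit P.det) : (P⁻¹ * ((P - Q) * Q * (P - Q))).trace =
      (Q * P).trace - 2 * (Q * Q).trace + (P⁻¹ * Q ^ 3).trace := by
  have hexpand : P⁻¹ * ((P - Q) * Q * (P - Q)) =
      P⁻¹ * P * (Q * P) - P⁻¹ * P * (Q * Q) - P⁻¹ * (Q * Q * P) + P⁻¹ * Q ^ 3 := by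
    noncomm_ring
  rw [hexpand, nonsing_inv_mul P hP, one_mul, one_mul, trace_add, trace_sub, trace_sub,
    trace_mul_comm P⁻¹, mul_nonsing_inv_cancel_right _ _ hP]
  ring

theorem frobSq_add_two_trace_inv_mul_pow_three {m : ℕ} {P Q : Matrix (Fin m) (Fin m) ℝ}
    (hP : P.IsSymm) (hQ : Q.IsSymm) (hPu : IsUnit P.det) :
    frobSq P + 2 * (P⁻¹ * Q ^ 3).trace =
      3 * frobSq Q + frobSq (P - Q) + 2 * (P⁻¹ * ((P - Q) * Q * (P - Q))).trace := by
  rw [trace_inv_mul_sub_mul_mul_sub hPu, frobSq_sub_of_isSymm hP hQ, hQ.frobSq_eq]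
  ring

theorem frobSq_add_two_trace_inv_mul_pow_three_self {m : ℕ} {Q : Matrix (Fin m) (Fin m) ℝ}
    (hQ : Q.IsSymm) (hQu : IsUnit Q.det) :
    frobSq Q + 2 * (Q⁻¹ * Q ^ 3).trace = 3 * frobSq Q := by
  simpa [frobSq_eq_zero_iff.mpr] using frobSq_add_two_trace_inv_mul_pow_three hQ hQ hQu

theorem S2_unique_maximizer_general
    {n m : ℕ}
    (C : Matrix (Fin n) (Fin n) ℝ)
    (W : Matrix (Fin m) (Fin n) ℝ)
    (S₂ : Matrix (Fin m) (Fin m) ℝ → ℝ)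
    (hS₂ : ∀ M, S₂ M = 2 * frobSq W - frobSq M - 2 * (M⁻¹ * (W * C * Wᵀ)).trace)
    (Mstar : Matrix (Fin m) (Fin m) ℝ) (hMstarPd : Mstar.PosDef)
    (hMstarCube : Mstar ^ 3 = W * C * Wᵀ) :
    ∀ M : Matrix (Fin m) (Fin m) ℝ, M.PosDef →
      S₂ M ≤ S₂ Mstar ∧ (S₂ M = S₂ Mstar ↔ M = Mstar) := by
  intro M hM
  have hMsymm : M.IsSymm := by simpa using hM.isHermitian
  have hMstarSymm : Mstar.IsSymm := by simpa using hMstarPd.isHermitian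
  have hgap : S₂ Mstar - S₂ M =
      frobSq (M - Mstar) + 2 * (M⁻¹ * ((M - Mstar) * Mstar * (M - Mstar))).trace := by
    have hM_expand := frobSq_add_two_trace_inv_mul_pow_three hMsymm hMstarSymm hM.det_pos.ne'.isUnit
    have hMstar_expand := frobSq_add_two_trace_inv_mul_pow_three_self hMstarSymm hMstarPd.det_pos.ne'.isUnit
    rw [hS₂, hS₂, ← hMstarCube]
    linarith
  have hcross : 0 ≤ (M⁻¹ * ((M - Mstar) * Mstar * (M - Mstar))).trace := by
    refine hM.inv.posSemidef.trace_mul_nonneg ?_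
    simpa [(hMsymm.sub hMstarSymm).eq] using
      hMstarPd.posSemidef.conjTranspose_mul_mul_same (M - Mstar)
  have hdist := frobSq_nonneg (M - Mstar)
  refine ⟨by linarith, fun heq => sub_eq_zero.mp (frobSq_eq_zero_iff.mp ?_), fun heq => heq ▸ rfl⟩
  linarith

/-- the symmetric positive definite cube root `M⋆` of `W C_X Wᵀ`
is the unique global maximizer of `S₂` over positive definite matrices. -/
theorem S2_unique_maximizer
    {n T m : ℕ} (hT : 1 ≤ T) (hmn : m ≤ n)
    (X : Matrix (Fin n) (Fin T) ℝ)
    (C : Matrix (Fin n) (Fin n) ℝ) (hC : C = (T : ℝ)⁻¹ • (X * Xᵀ)) (hCpd : C.PosDef)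
    (W : Matrix (Fin m) (Fin n) ℝ) (hW : W.rank = m)
    (S₂ : Matrix (Fin m) (Fin m) ℝ → ℝ)
    (hS₂ : ∀ M, S₂ M = 2 * frobSq W - frobSq M - 2 * (M⁻¹ * (W * C * Wᵀ)).trace)
    (Mstar : Matrix (Fin m) (Fin m) ℝ) (hMstarPd : Mstar.PosDef)
    (hMstarCube : Mstar ^ 3 = W * C * Wᵀ) :
    ∀ M : Matrix (Fin m) (Fin m) ℝ, M.PosDef →
      S₂ M ≤ S₂ Mstar ∧ (S₂ M = S₂ Mstar ↔ M = Mstar) :=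
  S2_unique_maximizer_general C W S₂ hS₂ Mstar hMstarPd hMstarCube
end

section
/- Fix T ≥ 1, X ∈ ℝ^{n×T} with C_X = (1/T)XXᵀ positive definite, and W ∈ ℝ^{m×n} of full row rank m (with m ≤ n). Let M₁, M₂ : [0,∞) → ℝ^{m×m} be two differentiable solutions of the gradient-flow lateral synaptic dynamics Ṁ(t) = −2M(t) + 2 M(t)⁻¹ W C_X Wᵀ M(t)⁻¹ such that M₁(t) and M₂(t) are symmetric positive definite for every t ≥ 0. Then for all t ≥ 0, ‖M₁(t) − M₂(t)‖_F ≤ e^{−2t} ‖M₁(0) − M₂(0)‖_F. -/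
/-!
Write `A = W C Wᵀ`, which is positive semidefinite. Along two solutions,
`d/dt ‖M₁ - M₂‖_F² = -4 ‖M₁ - M₂‖_F² + 4 tr((M₁ - M₂)(M₁⁻¹ A M₁⁻¹ - M₂⁻¹ A M₂⁻¹))`,
and with `D = M₁⁻¹ - M₂⁻¹` the last trace equals `-tr((M₁ + M₂) (D A D))`, minus the trace of a
product of two positive semidefinite matrices, hence `≤ 0`. Grönwall's inequality then gives
`‖M₁ t - M₂ t‖_F² ≤ e^{-4t} ‖M₁ 0 - M₂ 0‖_F²`.
-/

open Matrix

noncomputable def frobNorm {k l : ℕ} (A : Matrix (Fin k) (Fin l) ℝ) : ℝ :=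
  Real.sqrt (Aᵀ * A).trace

lemma le_exp_mul_mul_of_hasDerivAt_le {f f' : ℝ → ℝ} {K : ℝ}
    (hf : ∀ t, 0 ≤ t → HasDerivAt f (f' t) t) (hbound : ∀ t, 0 ≤ t → f' t ≤ K * f t)
    {t : ℝ} (ht : 0 ≤ t) : f t ≤ Real.exp (K * t) * f 0 := by
  have := le_gronwallBound_of_liminf_deriv_right_le (ε := 0) (b := t)
    (fun s hs => (hf s hs.1).continuousAt.continuousWithinAt)
    (fun s hs _ hr => (hf s hs.1).hasDerivWithinAt.liminf_right_slope_le hr) le_rfl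
    (fun s hs => by simpa using hbound s hs.1) t ⟨ht, le_rfl⟩
  rwa [gronwallBound_ε0, sub_zero, mul_comm] at this

namespace Matrix

lemma hasDerivAt_trace_transpose_mul_self {ι κ : Type*} [Fintype ι] [Fintype κ]
    {N : ℝ → Matrix ι κ ℝ} {N' : Matrix ι κ ℝ} {t : ℝ}
    (hN : ∀ i j, HasDerivAt (fun s => N s i j) (N' i j) t) :
    HasDerivAt (fun s => ((N s)ᵀ * N s).trace) (2 * ((N t)ᵀ * N').trace) t := by
  have h := HasDerivAt.fun_sum (u := Finset.univ) fun j _ =>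
    HasDerivAt.fun_sum (u := Finset.univ) fun i _ => (hN i j).fun_mul (hN i j)
  simp only [trace, diag, mul_apply, transpose_apply]
  refine h.congr_deriv ?_
  simp only [Finset.mul_sum]
  exact Finset.sum_congr rfl fun j _ => Finset.sum_congr rfl fun i _ => by ring

variable {ι : Type*} [Fintype ι] [DecidableEq ι]

lemma PosSemidef.trace_mul_nonneg_s8 {A B : Matrix ι ι ℝ} (hA : A.PosSemidef) (hB : B.PosSemidef) :
    0 ≤ (A * B).trace := by
  obtain ⟨D, rfl⟩ : ∃ D : Matrix ι ι ℝ, B = Dᴴ * D := by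
    open scoped MatrixOrder in exact CStarAlgebra.nonneg_iff_eq_star_mul_self.mp hB.nonneg
  rw [← Matrix.mul_assoc, trace_mul_comm, ← Matrix.mul_assoc]
  exact (hA.mul_mul_conjTranspose_same D).trace_nonneg

lemma trace_sub_mul_inv_mul_inv_sub {R : Type*} [CommRing R] {A M₁ M₂ : Matrix ι ι R}
    (h₁ : IsUnit M₁.det) (h₂ : IsUnit M₂.det) :
    ((M₁ - M₂) * (M₁⁻¹ * A * M₁⁻¹ - M₂⁻¹ * A * M₂⁻¹)).trace
      = -((M₁ + M₂) * ((M₁⁻¹ - M₂⁻¹) * A * (M₁⁻¹ - M₂⁻¹))).trace := by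
  set D := M₁⁻¹ - M₂⁻¹
  have hdiff : M₁ - M₂ = -(M₁ * D * M₂) := by
    simp only [D, Matrix.mul_sub, Matrix.sub_mul, mul_nonsing_inv _ h₁,
      nonsing_inv_mul_cancel_right _ _ h₂, Matrix.one_mul, neg_sub]
  have hsplit : M₁⁻¹ * A * M₁⁻¹ - M₂⁻¹ * A * M₂⁻¹ = D * A * M₁⁻¹ + M₂⁻¹ * A * D := by
    simp only [D, Matrix.mul_sub, Matrix.sub_mul]
    abel
  have h₁' : (M₁ * D * M₂ * (D * A * M₁⁻¹)).trace = (M₂ * (D * A * D)).trace :=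
    calc (M₁ * D * M₂ * (D * A * M₁⁻¹)).trace = (M₁ * (D * M₂ * D * A) * M₁⁻¹).trace := by
          simp only [Matrix.mul_assoc]
      _ = (D * (M₂ * D * A)).trace := by
          rw [trace_mul_comm, nonsing_inv_mul_cancel_left _ _ h₁]; simp only [Matrix.mul_assoc]
      _ = (M₂ * (D * A * D)).trace := by
          rw [trace_mul_comm]; simp only [Matrix.mul_assoc]
  have h₂' : M₁ * D * M₂ * (M₂⁻¹ * A * D) = M₁ * (D * A * D) := by
    simp only [← Matrix.mul_assoc, mul_nonsing_inv_cancel_right _ _ h₂]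
  rw [hdiff, hsplit, Matrix.neg_mul, Matrix.mul_add, trace_neg, trace_add, h₁', h₂',
    Matrix.add_mul, trace_add, add_comm]

lemma trace_sub_mul_inv_mul_inv_sub_nonpos {A M₁ M₂ : Matrix ι ι ℝ} (hA : A.PosSemidef)
    (h₁ : M₁.PosDef) (h₂ : M₂.PosDef) :
    ((M₁ - M₂) * (M₁⁻¹ * A * M₁⁻¹ - M₂⁻¹ * A * M₂⁻¹)).trace ≤ 0 := by
  rw [trace_sub_mul_inv_mul_inv_sub h₁.det_pos.ne'.isUnit h₂.det_pos.ne'.isUnit, neg_nonpos]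
  have hD : (M₁⁻¹ - M₂⁻¹)ᴴ = M₁⁻¹ - M₂⁻¹ := (h₁.isHermitian.inv.sub h₂.isHermitian.inv).eq
  have hDAD := hA.mul_mul_conjTranspose_same (M₁⁻¹ - M₂⁻¹)
  rw [hD] at hDAD
  exact (h₁.posSemidef.add h₂.posSemidef).trace_mul_nonneg_s8 hDAD

end Matrix

noncomputable def lateralField {ι : Type*} [Fintype ι] [DecidableEq ι] (A M : Matrix ι ι ℝ) :
    Matrix ι ι ℝ :=
  -((2 : ℝ) • M) + (2 : ℝ) • (M⁻¹ * A * M⁻¹)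

lemma trace_transpose_sub_mul_lateralField_sub_le {ι : Type*} [Fintype ι] [DecidableEq ι]
    {A M₁ M₂ : Matrix ι ι ℝ} (hA : A.PosSemidef) (h₁ : M₁.PosDef) (h₂ : M₂.PosDef) :
    ((M₁ - M₂)ᵀ * (lateralField A M₁ - lateralField A M₂)).trace
      ≤ -2 * ((M₁ - M₂)ᵀ * (M₁ - M₂)).trace := by
  have hsym : (M₁ - M₂)ᵀ = M₁ - M₂ := (h₁.isHermitian.sub h₂.isHermitian).eq
  have hsplit : lateralField A M₁ - lateralField A M₂
      = (-2 : ℝ) • (M₁ - M₂) + (2 : ℝ) • (M₁⁻¹ * A * M₁⁻¹ - M₂⁻¹ * A * M₂⁻¹) := by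
    simp only [lateralField, smul_sub, neg_smul]
    abel
  rw [hsym, hsplit, Matrix.mul_add, trace_add, Matrix.mul_smul, Matrix.mul_smul, trace_smul,
    trace_smul, smul_eq_mul, smul_eq_mul]
  linarith [trace_sub_mul_inv_mul_inv_sub_nonpos hA h₁ h₂]

theorem lateral_dynamics_contracting_general
    {n m : ℕ}
    (C : Matrix (Fin n) (Fin n) ℝ) (hCpd : C.PosDef)
    (W : Matrix (Fin m) (Fin n) ℝ)
    (M₁ M₂ : ℝ → Matrix (Fin m) (Fin m) ℝ)
    (hM₁pd : ∀ t : ℝ, 0 ≤ t → (M₁ t).PosDef)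
    (hM₂pd : ∀ t : ℝ, 0 ≤ t → (M₂ t).PosDef)
    (hM₁ : ∀ t : ℝ, 0 ≤ t → ∀ i j, HasDerivAt (fun s => M₁ s i j)
        ((-((2 : ℝ) • M₁ t) + (2 : ℝ) • ((M₁ t)⁻¹ * (W * C * Wᵀ) * (M₁ t)⁻¹)) i j) t)
    (hM₂ : ∀ t : ℝ, 0 ≤ t → ∀ i j, HasDerivAt (fun s => M₂ s i j)
        ((-((2 : ℝ) • M₂ t) + (2 : ℝ) • ((M₂ t)⁻¹ * (W * C * Wᵀ) * (M₂ t)⁻¹)) i j) t) :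
    ∀ t : ℝ, 0 ≤ t →
      frobNorm (M₁ t - M₂ t) ≤ Real.exp (-2 * t) * frobNorm (M₁ 0 - M₂ 0) := by
  intro t ht
  set A := W * C * Wᵀ
  have hA : A.PosSemidef := by simpa using hCpd.posSemidef.mul_mul_conjTranspose_same W
  have hderiv : ∀ s, 0 ≤ s → HasDerivAt (fun s => ((M₁ s - M₂ s)ᵀ * (M₁ s - M₂ s)).trace)
      (2 * ((M₁ s - M₂ s)ᵀ * (lateralField A (M₁ s) - lateralField A (M₂ s))).trace) s :=
    fun s hs => hasDerivAt_trace_transpose_mul_self fun i j => (hM₁ s hs i j).sub (hM₂ s hs i j)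
  have hdecay := le_exp_mul_mul_of_hasDerivAt_le (K := -4) hderiv (fun s hs => by
    linarith [trace_transpose_sub_mul_lateralField_sub_le hA (hM₁pd s hs) (hM₂pd s hs)]) ht
  calc frobNorm (M₁ t - M₂ t)
      ≤ Real.sqrt (Real.exp (-2 * t) * Real.exp (-2 * t) *
          ((M₁ 0 - M₂ 0)ᵀ * (M₁ 0 - M₂ 0)).trace) := by
        rw [← Real.exp_add, show -2 * t + -2 * t = -4 * t by ring]
        exact Real.sqrt_le_sqrt hdecay
    _ = Real.exp (-2 * t) * frobNorm (M₁ 0 - M₂ 0) := by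
        rw [Real.sqrt_mul (mul_self_nonneg _), Real.sqrt_mul_self (Real.exp_nonneg _), frobNorm]

/-- the gradient-flow lateral synaptic dynamics
`Ṁ = −2M + 2M⁻¹ W C_X Wᵀ M⁻¹` is strongly contracting with rate 2 on positive
definite solutions, with respect to the Frobenius norm. -/
theorem lateral_dynamics_contracting
    {n T m : ℕ} (hT : 1 ≤ T) (hmn : m ≤ n)
    (X : Matrix (Fin n) (Fin T) ℝ)
    (C : Matrix (Fin n) (Fin n) ℝ) (hC : C = (T : ℝ)⁻¹ • (X * Xᵀ)) (hCpd : C.PosDef)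
    (W : Matrix (Fin m) (Fin n) ℝ) (hW : W.rank = m)
    (M₁ M₂ : ℝ → Matrix (Fin m) (Fin m) ℝ)
    (hM₁pd : ∀ t : ℝ, 0 ≤ t → (M₁ t).PosDef)
    (hM₂pd : ∀ t : ℝ, 0 ≤ t → (M₂ t).PosDef)
    (hM₁ : ∀ t : ℝ, 0 ≤ t → ∀ i j, HasDerivAt (fun s => M₁ s i j)
        ((-((2 : ℝ) • M₁ t) + (2 : ℝ) • ((M₁ t)⁻¹ * (W * C * Wᵀ) * (M₁ t)⁻¹)) i j) t)
    (hM₂ : ∀ t : ℝ, 0 ≤ t → ∀ i j, HasDerivAt (fun s => M₂ s i j)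
        ((-((2 : ℝ) • M₂ t) + (2 : ℝ) • ((M₂ t)⁻¹ * (W * C * Wᵀ) * (M₂ t)⁻¹)) i j) t) :
    ∀ t : ℝ, 0 ≤ t →
      frobNorm (M₁ t - M₂ t) ≤ Real.exp (-2 * t) * frobNorm (M₁ 0 - M₂ 0) :=
  lateral_dynamics_contracting_general C hCpd W M₁ M₂ hM₁pd hM₂pd hM₁ hM₂
end

section
/- Let X ∈ ℝ^{n×T} have singular value decomposition X = U_X Σ_X V_Xᵀ with U_X ∈ ℝ^{n×n} and V_X ∈ ℝ^{T×T} orthogonal, and let the top m singular values σ_1 ≥ … ≥ σ_m of X be positive. Let C_X = (1/T)XXᵀ, so that C_X = U_X Λ_C U_Xᵀ with Λ_C = (1/T)Σ_XΣ_Xᵀ. Let Λ_C^m = diag(σ_1²/T, …, σ_m²/T), let U_X^m ∈ ℝ^{n×m} consist of the first m columns of U_X, let Σ_X^m = diag(σ_1, …, σ_m), and let V_X^m ∈ ℝ^{T×m} consist of the first m columns of V_X. For any orthogonal U ∈ ℝ^{m×m}, set W⋆ = U Λ_C^m (U_X^m)ᵀ and let M⋆ be the unique symmetric positive definite cube root of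 W⋆ C_X (W⋆)ᵀ. Then (M⋆)⁻¹ W⋆ X = U Σ_X^m (V_X^m)ᵀ; that is, the projected optimal output Y⋆ = (M⋆)⁻¹W⋆X equals the projection of the input data onto the principal subspace of their covariance matrix, as in the closed-form solution of the similarity matching problem. -/
/-!
Write `P`, `Q` for the leading `m` columns of `U_X`, `V_X`, `D = Σ_X^m` and `Λ = Λ_C^m`.
Orthogonality of `U_X` gives `Pᵀ X = D Qᵀ`, and since `Qᵀ Q = 1` and `D² / T = Λ`, the
covariance `W⋆ C_X W⋆ᵀ = U Λ D² Λ Uᵀ / T` equals `U Λ³ Uᵀ = (U Λ Uᵀ)³`. Positive semidefinite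
cube roots are unique (continuous functional calculus), so `M⋆ = U Λ Uᵀ`; hence
`W⋆ = M⋆ U Pᵀ` and `M⋆⁻¹ W⋆ X = U Pᵀ X = U D Qᵀ`.
-/

open scoped MatrixOrder NNReal ComplexOrder

namespace CFC

variable {A : Type*} [PartialOrder A] [Ring A] [StarRing A] [TopologicalSpace A]
  [StarOrderedRing A] [Algebra ℝ A] [ContinuousFunctionalCalculus ℝ A IsSelfAdjoint]
  [NonnegSpectrumClass ℝ A] [IsSemitopologicalRing A] [T2Space A]

theorem eq_of_pow_eq_pow {a b : A} {n : ℕ} (hn : n ≠ 0) (ha : 0 ≤ a) (hb : 0 ≤ b)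
    (h : a ^ n = b ^ n) : a = b := by
  have hn' : (n : ℝ≥0) ≠ 0 := Nat.cast_ne_zero.mpr hn
  have root_pow : ∀ c : A, 0 ≤ c → (c ^ n) ^ (n : ℝ≥0)⁻¹ = c := fun c hc => by
    rw [← rpow_natCast c n, ← NNReal.coe_natCast, ← nnrpow_eq_rpow (pos_iff_ne_zero.mpr hn'),
      nnrpow_nnrpow_inv c hn']
  rw [← root_pow a ha, ← root_pow b hb, h]

end CFC

namespace Matrix

theorem PosSemidef.eq_of_pow_eq_pow {ι 𝕜 : Type*} [Fintype ι] [DecidableEq ι] [RCLike 𝕜]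
    {A B : Matrix ι ι 𝕜} {n : ℕ} (hn : n ≠ 0) (hA : A.PosSemidef) (hB : B.PosSemidef)
    (h : A ^ n = B ^ n) : A = B :=
  CFC.eq_of_pow_eq_pow hn hA.nonneg hB.nonneg h

variable {R : Type*} [CommRing R]

theorem transpose_submatrix_id_mul_mul {ι κ α : Type*} [Fintype ι] [DecidableEq ι]
    {P : Matrix ι ι R} (hP : Pᵀ * P = 1) (e : κ → ι) (N : Matrix ι α R) :
    (P.submatrix id e)ᵀ * (P * N) = N.submatrix e id :=
  calc (P.submatrix id e)ᵀ * (P * N) = (Pᵀ * P * N).submatrix e id := by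
        rw [Matrix.mul_assoc]; rfl
    _ = N.submatrix e id := by rw [hP, Matrix.one_mul]

theorem transpose_submatrix_id_mul_submatrix_id {ι κ : Type*} [Fintype ι] [DecidableEq ι]
    [DecidableEq κ] {P : Matrix ι ι R} (hP : Pᵀ * P = 1) {e : κ → ι}
    (he : Function.Injective e) :
    (P.submatrix id e)ᵀ * P.submatrix id e = 1 := by
  rw [← submatrix_one e he, ← hP]; rfl

theorem submatrix_castLE_mul_of_rectDiagonal {n T m : ℕ} {α : Type*} (hmn : m ≤ n)
    (hmT : m ≤ T) {s : ℕ → R} {S : Matrix (Fin n) (Fin T) R}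
    (hS : ∀ i j, S i j = if (i : ℕ) = (j : ℕ) then s i else 0) (N : Matrix (Fin T) α R) :
    S.submatrix (Fin.castLE hmn) id * N =
      diagonal (fun i : Fin m => s i) * N.submatrix (Fin.castLE hmT) id := by
  ext i j
  have hcast : ∀ k : Fin T, (i : ℕ) = k ↔ Fin.castLE hmT i = k := by simp [Fin.ext_iff]
  simp [mul_apply, hS, hcast, ite_mul, diagonal_apply]

theorem transpose_submatrix_castLE_mul_svd {n T m : ℕ} (hmn : m ≤ n) (hmT : m ≤ T)
    {UX : Matrix (Fin n) (Fin n) R} {VX : Matrix (Fin T) (Fin T) R} (hUX : UXᵀ * UX = 1)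
    {s : ℕ → R} {S : Matrix (Fin n) (Fin T) R}
    (hS : ∀ i j, S i j = if (i : ℕ) = (j : ℕ) then s i else 0) :
    (UX.submatrix id (Fin.castLE hmn))ᵀ * (UX * S * VXᵀ) =
      diagonal (fun i : Fin m => s i) * (VX.submatrix id (Fin.castLE hmT))ᵀ := by
  rw [Matrix.mul_assoc, transpose_submatrix_id_mul_mul hUX]
  exact submatrix_castLE_mul_of_rectDiagonal hmn hmT hS VXᵀ

theorem mul_mul_transpose_pow {ι : Type*} [Fintype ι] [DecidableEq ι] {U : Matrix ι ι R}
    (hU : Uᵀ * U = 1) (A : Matrix ι ι R) (k : ℕ) : (U * A * Uᵀ) ^ k = U * A ^ k * Uᵀ :=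
  Units.conj_pow ⟨U, Uᵀ, mul_eq_one_comm.mp hU, hU⟩ A k

theorem mul_smul_mul_transpose_eq_pow_three {ι κ τ : Type*} [Fintype ι] [DecidableEq ι]
    [Fintype κ] [Fintype τ] {U Λ D : Matrix ι ι R} {P : Matrix κ ι R} {Q : Matrix τ ι R}
    {X : Matrix κ τ R} {c : R} (hU : Uᵀ * U = 1) (hPX : Pᵀ * X = D * Qᵀ) (hQ : Qᵀ * Q = 1)
    (hΛ : c • (D * Dᵀ) = Λ) (hΛsymm : Λᵀ = Λ) :
    U * Λ * Pᵀ * (c • (X * Xᵀ)) * (U * Λ * Pᵀ)ᵀ = (U * Λ * Uᵀ) ^ 3 :=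
  calc U * Λ * Pᵀ * (c • (X * Xᵀ)) * (U * Λ * Pᵀ)ᵀ
      = U * Λ * (c • ((Pᵀ * X) * (Pᵀ * X)ᵀ)) * Λᵀ * Uᵀ := by
        simp only [transpose_mul, transpose_transpose, Matrix.mul_assoc, Matrix.mul_smul,
          Matrix.smul_mul]
    _ = U * Λ ^ 3 * Uᵀ := by
        rw [hPX, transpose_mul, transpose_transpose, Matrix.mul_assoc D, ← Matrix.mul_assoc Qᵀ,
          hQ, Matrix.one_mul, hΛ, hΛsymm, pow_three]
        simp only [Matrix.mul_assoc]
    _ = (U * Λ * Uᵀ) ^ 3 := (mul_mul_transpose_pow hU Λ 3).symm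

end Matrix

open Matrix

theorem optimal_projection_general
    {n T m : ℕ} (hmn : m ≤ n) (hmT : m ≤ T)
    (X : Matrix (Fin n) (Fin T) ℝ)
    (UX : Matrix (Fin n) (Fin n) ℝ) (VX : Matrix (Fin T) (Fin T) ℝ)
    (hUX : UXᵀ * UX = 1)
    (hVX : VXᵀ * VX = 1)
    (s : ℕ → ℝ) (SigX : Matrix (Fin n) (Fin T) ℝ)
    (hSigX : ∀ i j, SigX i j = if (i : ℕ) = (j : ℕ) then s i else 0)
    (hX : X = UX * SigX * VXᵀ)
    (U : Matrix (Fin m) (Fin m) ℝ) (hU : Uᵀ * U = 1)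
    (Wstar : Matrix (Fin m) (Fin n) ℝ)
    (hWstar : Wstar = U * Matrix.diagonal (fun i : Fin m => (s i.1) ^ 2 / (T : ℝ)) *
        (UX.submatrix id (Fin.castLE hmn))ᵀ)
    (Mstar : Matrix (Fin m) (Fin m) ℝ) (hMpd : Mstar.PosDef)
    (hM3 : Mstar ^ 3 = Wstar * ((T : ℝ)⁻¹ • (X * Xᵀ)) * Wstarᵀ) :
    Mstar⁻¹ * Wstar * X =
      U * Matrix.diagonal (fun i : Fin m => s i.1) * (VX.submatrix id (Fin.castLE hmT))ᵀ := by
  set P := UX.submatrix id (Fin.castLE hmn)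
  set Q := VX.submatrix id (Fin.castLE hmT)
  set D := diagonal fun i : Fin m => s i.1
  set Λ := diagonal fun i : Fin m => s i.1 ^ 2 / (T : ℝ)
  have hPX : Pᵀ * X = D * Qᵀ := hX ▸ transpose_submatrix_castLE_mul_svd hmn hmT hUX hSigX
  have hQ : Qᵀ * Q = 1 := transpose_submatrix_id_mul_submatrix_id hVX (Fin.castLE_injective hmT)
  have hΛ : (T : ℝ)⁻¹ • (D * Dᵀ) = Λ := by
    simp only [D, Λ, diagonal_transpose, diagonal_mul_diagonal, ← diagonal_smul]
    congr 1; ext i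
    simp only [Pi.smul_apply, smul_eq_mul]; ring
  have hMstar : Mstar = U * Λ * Uᵀ := by
    refine hMpd.posSemidef.eq_of_pow_eq_pow three_ne_zero ?_ <| hM3.trans <| hWstar ▸
      mul_smul_mul_transpose_eq_pow_three hU hPX hQ hΛ (diagonal_transpose _)
    simpa using (posSemidef_diagonal_iff.mpr fun i => by positivity).mul_mul_conjTranspose_same U
  have hW : Wstar = Mstar * (U * Pᵀ) := by
    rw [hWstar, hMstar, Matrix.mul_assoc _ Uᵀ, ← Matrix.mul_assoc Uᵀ, hU, Matrix.one_mul]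
  rw [hW, Matrix.nonsing_inv_mul_cancel_left _ _ hMpd.det_pos.ne'.isUnit, Matrix.mul_assoc, hPX,
    Matrix.mul_assoc]

/-- projecting the optimal `W⋆`, `M⋆` back to the output space
yields `Y⋆ = (M⋆)⁻¹ W⋆ X = U Σ_X^m (V_X^m)ᵀ`, the projection of the input data
onto the principal subspace of their covariance matrix. -/
theorem optimal_projection
    {n T m : ℕ} (hT : 1 ≤ T) (hmn : m ≤ n) (hmT : m ≤ T)
    (X : Matrix (Fin n) (Fin T) ℝ)
    (UX : Matrix (Fin n) (Fin n) ℝ) (VX : Matrix (Fin T) (Fin T) ℝ)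
    (hUX : UXᵀ * UX = 1) (hUX' : UX * UXᵀ = 1)
    (hVX : VXᵀ * VX = 1) (hVX' : VX * VXᵀ = 1)
    (s : ℕ → ℝ) (SigX : Matrix (Fin n) (Fin T) ℝ)
    (hSigX : ∀ i j, SigX i j = if (i : ℕ) = (j : ℕ) then s i else 0)
    (hdesc : ∀ i j : ℕ, i ≤ j → j < min n T → s j ≤ s i)
    (hnonneg : ∀ i : ℕ, i < min n T → 0 ≤ s i)
    (hpos : ∀ i : ℕ, i < m → 0 < s i)
    (hX : X = UX * SigX * VXᵀ)
    (U : Matrix (Fin m) (Fin m) ℝ) (hU : Uᵀ * U = 1) (hU' : U * Uᵀ = 1)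
    (Wstar : Matrix (Fin m) (Fin n) ℝ)
    (hWstar : Wstar = U * Matrix.diagonal (fun i : Fin m => (s i.1) ^ 2 / (T : ℝ)) *
        (UX.submatrix id (Fin.castLE hmn))ᵀ)
    (Mstar : Matrix (Fin m) (Fin m) ℝ) (hMpd : Mstar.PosDef)
    (hM3 : Mstar ^ 3 = Wstar * ((T : ℝ)⁻¹ • (X * Xᵀ)) * Wstarᵀ) :
    Mstar⁻¹ * Wstar * X =
      U * Matrix.diagonal (fun i : Fin m => s i.1) * (VX.submatrix id (Fin.castLE hmT))ᵀ :=
  optimal_projection_general hmn hmT X UX VX hUX hVX s SigX hSigX hX U hU Wstar hWstar Mstar hMpd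
    hM3
end

section
/- Let f : ℝⁿ → ℝ be continuously differentiable and strongly convex with parameter ν > 0. Let x, y : ℝ → ℝⁿ be two differentiable solutions of the gradient-flow dynamics ẋ(t) = −∇f(x(t)). Then the flow is strongly contracting with rate ν with respect to the Euclidean norm: for all t ≥ 0, ‖x(t) − y(t)‖₂ ≤ e^{−νt} ‖x(0) − y(0)‖₂. -/
/-!
Strong convexity with modulus `ν` makes the gradient strongly monotone,
`ν ‖a - b‖² ≤ ⟪∇f a - ∇f b, a - b⟫`, by adding the first-order inequalities at `a` and at `b`.
Hence the difference `w = x - y` of two trajectories satisfies `d/dt ‖w‖² ≤ -2ν ‖w‖²`,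
and Grönwall's inequality gives `‖w t‖² ≤ e^{-2νt} ‖w 0‖²`.
-/

open Set InnerProductSpace Real

section

variable {E : Type*} [NormedAddCommGroup E]

theorem ConvexOn.fderiv_sub_le_sub [NormedSpace ℝ E] {s : Set E} {g : E → ℝ} {g' : E →L[ℝ] ℝ}
    {a b : E} (hg : ConvexOn ℝ s g) (ha : a ∈ s) (hb : b ∈ s) (hgb : HasFDerivAt g g' b) :
    g' (a - b) ≤ g a - g b := by
  set ℓ : ℝ →ᵃ[ℝ] E := AffineMap.lineMap b a
  have hline : ConvexOn ℝ (ℓ ⁻¹' s) (g ∘ ℓ) := hg.comp_affineMap ℓ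
  have hderiv : HasDerivAt (g ∘ ℓ) (g' (a - b)) 0 := by
    have hgb' : HasFDerivAt g g' (ℓ 0) := by simpa [ℓ] using hgb
    exact hgb'.comp_hasDerivAt (0 : ℝ) AffineMap.hasDerivAt_lineMap
  simpa [slope_def_field, ℓ] using
    hline.le_slope_of_hasDerivAt (by simpa [ℓ]) (by simpa [ℓ]) one_pos hderiv

variable [InnerProductSpace ℝ E]

theorem StrongConvexOn.fderiv_sub_le_sub {s : Set E} {m : ℝ} {f : E → ℝ} {f' : E →L[ℝ] ℝ}
    {a b : E} (hf : StrongConvexOn s m f) (ha : a ∈ s) (hb : b ∈ s) (hfb : HasFDerivAt f f' b) :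
    f' (a - b) ≤ f a - f b - m / 2 * ‖a - b‖ ^ 2 := by
  have key := (strongConvexOn_iff_convex.mp hf).fderiv_sub_le_sub ha hb
    (hfb.sub ((hasStrictFDerivAt_norm_sq b).hasFDerivAt.const_mul (m / 2)))
  have hnorm : ‖a - b‖ ^ 2 = ‖a‖ ^ 2 - ‖b‖ ^ 2 - 2 * ⟪b, a - b⟫_ℝ := by
    rw [norm_sub_sq_real, inner_sub_right, real_inner_self_eq_norm_sq, real_inner_comm]
    ring
  simp only [sub_apply, smul_apply, innerSL_apply_apply, smul_eq_mul, nsmul_eq_mul] at key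
  rw [hnorm]
  linarith

theorem StrongConvexOn.mul_norm_sub_sq_le_inner_gradient_sub [CompleteSpace E] {s : Set E}
    {m : ℝ} {f : E → ℝ} {a b : E} (hf : StrongConvexOn s m f) (ha : a ∈ s) (hb : b ∈ s)
    (hfa : DifferentiableAt ℝ f a) (hfb : DifferentiableAt ℝ f b) :
    m * ‖a - b‖ ^ 2 ≤ ⟪gradient f a - gradient f b, a - b⟫_ℝ := by
  have hab := hf.fderiv_sub_le_sub ha hb hfb.hasGradientAt.hasFDerivAt
  have hba := hf.fderiv_sub_le_sub hb ha hfa.hasGradientAt.hasFDerivAt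
  rw [toDual_apply_apply] at hab hba
  rw [← neg_sub a b, inner_neg_right, norm_neg] at hba
  rw [inner_sub_left]
  linarith

theorem norm_le_exp_mul_of_inner_deriv_le {w w' : ℝ → E} {m : ℝ}
    (hw : ∀ t, HasDerivAt w (w' t) t) (hdiss : ∀ t, ⟪w' t, w t⟫_ℝ ≤ -m * ‖w t‖ ^ 2) {t : ℝ} (ht : 0 ≤ t) :
    ‖w t‖ ≤ exp (-m * t) * ‖w 0‖ := by
  have hsq : ‖w t‖ ^ 2 ≤ ‖w 0‖ ^ 2 * exp (-2 * m * t) := by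
    have := le_gronwallBound_of_liminf_deriv_right_le (a := 0) (b := t) (K := -2 * m) (ε := 0)
      (f' := fun s => 2 * ⟪w s, w' s⟫_ℝ)
      (fun s _ => (hw s).norm_sq.continuousAt.continuousWithinAt)
      (fun s _ _ hr => (hw s).norm_sq.hasDerivWithinAt.liminf_right_slope_le hr) le_rfl
      (fun s _ => by linarith [hdiss s, real_inner_comm (w s) (w' s)]) t ⟨ht, le_rfl⟩
    simpa [gronwallBound_ε0] using this
  refine (pow_le_pow_iff_left₀ (norm_nonneg _) (by positivity) two_ne_zero).mp (hsq.trans_eq ?_)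
  rw [mul_pow, ← exp_nat_mul]
  push_cast
  ring_nf

theorem gradient_flow_contracting_general
    {n : ℕ} (f : EuclideanSpace ℝ (Fin n) → ℝ) (hf : ContDiff ℝ 1 f)
    (ν : ℝ)
    (hconv : ∀ x₁ x₂ : EuclideanSpace ℝ (Fin n), x₁ ≠ x₂ →
      ∀ α : ℝ, α ∈ Set.Icc (0 : ℝ) 1 →
        f (α • x₁ + (1 - α) • x₂) ≤
          α * f x₁ + (1 - α) * f x₂ - (ν / 2) * α * (1 - α) * ‖x₁ - x₂‖ ^ 2)
    (x y : ℝ → EuclideanSpace ℝ (Fin n))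
    (hx : ∀ t : ℝ, HasDerivAt x (-gradient f (x t)) t)
    (hy : ∀ t : ℝ, HasDerivAt y (-gradient f (y t)) t) :
    ∀ t : ℝ, 0 ≤ t → ‖x t - y t‖ ≤ Real.exp (-ν * t) * ‖x 0 - y 0‖ := by
  have hstrong : StrongConvexOn univ ν f := by
    refine ⟨convex_univ, fun x₁ _ x₂ _ a b ha hb hab => ?_⟩
    obtain rfl : b = 1 - a := by linarith
    rcases eq_or_ne x₁ x₂ with rfl | hne
    · simp only [← add_smul, add_sub_cancel, one_smul, sub_self, norm_zero, smul_eq_mul]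
      linarith
    · linear_combination hconv x₁ x₂ hne a ⟨ha, by linarith⟩
  have hdiff : Differentiable ℝ f := hf.differentiable one_ne_zero
  intro t ht
  refine norm_le_exp_mul_of_inner_deriv_le (fun t => (hx t).sub (hy t)) (fun s => ?_) ht
  have hmono := hstrong.mul_norm_sub_sq_le_inner_gradient_sub (mem_univ (x s)) (mem_univ (y s))
    (hdiff _) (hdiff _)
  rw [Pi.sub_apply, neg_sub_neg, ← neg_sub, inner_neg_left]
  linarith

/-- the gradient flow of a continuously differentiable, strongly
convex function with parameter `ν > 0` is strongly contracting with rate `ν`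
with respect to the Euclidean norm. -/
theorem gradient_flow_contracting
    {n : ℕ} (f : EuclideanSpace ℝ (Fin n) → ℝ) (hf : ContDiff ℝ 1 f)
    (ν : ℝ) (hν : 0 < ν)
    (hconv : ∀ x₁ x₂ : EuclideanSpace ℝ (Fin n), x₁ ≠ x₂ →
      ∀ α : ℝ, α ∈ Set.Icc (0 : ℝ) 1 →
        f (α • x₁ + (1 - α) • x₂) ≤
          α * f x₁ + (1 - α) * f x₂ - (ν / 2) * α * (1 - α) * ‖x₁ - x₂‖ ^ 2)
    (x y : ℝ → EuclideanSpace ℝ (Fin n))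
    (hx : ∀ t : ℝ, HasDerivAt x (-gradient f (x t)) t)
    (hy : ∀ t : ℝ, HasDerivAt y (-gradient f (y t)) t) :
    ∀ t : ℝ, 0 ≤ t → ‖x t - y t‖ ≤ Real.exp (-ν * t) * ‖x 0 - y 0‖ :=
  gradient_flow_contracting_general f hf ν hconv x y hx hy
end
end

section
/- Let m ≥ 1 and let λ ∈ ℝ^m have strictly positive entries λ_1, …, λ_m. Then for every σ ∈ ℝ^m with nonnegative entries satisfying Σ_{i=1}^m σ_i² = 1, one has Σ_{i=1}^m σ_i^{4/3} λ_i^{2/3} ≤ (Σ_{i=1}^m λ_i²)^{1/3} = ‖λ‖₂^{2/3}, and equality holds if and only if σ_i = λ_i/‖λ‖₂ for all i. In particular, the maximum of σ ↦ Σ_i σ_i^{4/3} λ_i^{2/3} over the nonnegative unit sphere equals ‖λ‖₂^{2/3}, attained at σ = λ/‖λ‖₂. -/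
lemma cube_amgm {u v : ℝ} (hu : 0 ≤ u) (hv : 0 < v) :
    3 * (u ^ 2 * v) ≤ 2 * u ^ 3 + v ^ 3 ∧
      (3 * (u ^ 2 * v) = 2 * u ^ 3 + v ^ 3 ↔ u = v) := by
  constructor
  · nlinarith [sq_nonneg (u - v)]
  constructor
  · intro h
    have h2 : (u - v) ^ 2 * (2 * u + v) = 0 := by linear_combination -h
    have h3 : (u - v) ^ 2 = 0 := by
      rcases mul_eq_zero.1 h2 with h | h
      · exact h
      · nlinarith
    have := pow_eq_zero_iff (n := 2) (by norm_num) |>.mp h3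
    linarith [sub_eq_zero.1 this]
  · rintro rfl; ring


/-- the Hölder-based maximization step. For positive `λ` and
nonnegative `σ` on the unit sphere, `Σ σᵢ^{4/3} λᵢ^{2/3} ≤ (Σ λᵢ²)^{1/3} = ‖λ‖₂^{2/3}`,
with equality iff `σ = λ/‖λ‖₂`. -/
theorem holder_maximization
    {m : ℕ} (hm : 1 ≤ m) (lam σ : Fin m → ℝ)
    (hlam : ∀ i, 0 < lam i) (hσ : ∀ i, 0 ≤ σ i)
    (hsum : ∑ i, (σ i) ^ 2 = 1) :
    (∑ i, (σ i) ^ ((4 : ℝ) / 3) * (lam i) ^ ((2 : ℝ) / 3) ≤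
        (∑ i, (lam i) ^ 2) ^ ((1 : ℝ) / 3)) ∧
      ((∑ i, (lam i) ^ 2) ^ ((1 : ℝ) / 3) =
        (Real.sqrt (∑ i, (lam i) ^ 2)) ^ ((2 : ℝ) / 3)) ∧
      ((∑ i, (σ i) ^ ((4 : ℝ) / 3) * (lam i) ^ ((2 : ℝ) / 3) =
          (∑ i, (lam i) ^ 2) ^ ((1 : ℝ) / 3)) ↔
        ∀ i, σ i = lam i / Real.sqrt (∑ j, (lam j) ^ 2)) := by
  have hne : Nonempty (Fin m) := ⟨⟨0, hm⟩⟩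
  set S : ℝ := ∑ i, (lam i) ^ 2 with hSdef
  have hS : 0 < S :=
    Finset.sum_pos (fun i _ => pow_pos (hlam i) 2) Finset.univ_nonempty
  have hsqS : 0 < Real.sqrt S := Real.sqrt_pos.2 hS
  set u : Fin m → ℝ := fun i => (σ i) ^ ((2 : ℝ) / 3) with hudef
  set v : Fin m → ℝ := fun i => (lam i / Real.sqrt S) ^ ((2 : ℝ) / 3) with hvdef
  have hu : ∀ i, 0 ≤ u i := fun i => Real.rpow_nonneg (hσ i) _
  have hvpos : ∀ i, 0 < v i :=
    fun i => Real.rpow_pos_of_pos (div_pos (hlam i) hsqS) _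
  have hu2 : ∀ i, (u i) ^ 2 = (σ i) ^ ((4 : ℝ) / 3) := by
    intro i
    rw [hudef]
    rw [← Real.rpow_natCast ((σ i) ^ ((2 : ℝ) / 3)) 2, ← Real.rpow_mul (hσ i)]
    norm_num
  have hu3 : ∀ i, (u i) ^ 3 = (σ i) ^ 2 := by
    intro i
    rw [hudef]
    rw [← Real.rpow_natCast ((σ i) ^ ((2 : ℝ) / 3)) 3, ← Real.rpow_mul (hσ i)]
    norm_num [Real.rpow_two]
  have hB : S ^ ((1 : ℝ) / 3) = (Real.sqrt S) ^ ((2 : ℝ) / 3) := by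
    rw [Real.sqrt_eq_rpow, ← Real.rpow_mul hS.le]
    norm_num
  have hvS : ∀ i, v i = (lam i) ^ ((2 : ℝ) / 3) / S ^ ((1 : ℝ) / 3) := by
    intro i
    simp only [hvdef]
    rw [Real.div_rpow (hlam i).le (Real.sqrt_nonneg S), ← hB]
  have hv3 : ∀ i, (v i) ^ 3 = (lam i) ^ 2 / S := by
    intro i
    rw [hvdef]
    rw [← Real.rpow_natCast ((lam i / Real.sqrt S) ^ ((2 : ℝ) / 3)) 3,
      ← Real.rpow_mul (div_pos (hlam i) hsqS).le]
    norm_num [Real.rpow_two, div_pow, Real.sq_sqrt hS.le]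
  have hSp : 0 < S ^ ((1 : ℝ) / 3) := Real.rpow_pos_of_pos hS _
  have key : ∀ i ∈ Finset.univ, (u i) ^ 2 * v i ≤ (2 * (σ i) ^ 2 + (lam i) ^ 2 / S) / 3 := by
    intro i _
    have h := (cube_amgm (hu i) (hvpos i)).1
    rw [hu3 i, hv3 i] at h
    linarith
  have hsum_bound : ∑ i, (2 * (σ i) ^ 2 + (lam i) ^ 2 / S) / 3 = 1 := by
    have : ∑ i, (2 * (σ i) ^ 2 + (lam i) ^ 2 / S) / 3 =
        (2 * (∑ i, (σ i) ^ 2) + (∑ i, (lam i) ^ 2) / S) / 3 := by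
      rw [← Finset.sum_div, Finset.sum_add_distrib, ← Finset.mul_sum, ← Finset.sum_div]
    rw [this, hsum, ← hSdef, div_self hS.ne']
    norm_num
  have hsum_term : ∑ i, (u i) ^ 2 * v i =
      (∑ i, (σ i) ^ ((4 : ℝ) / 3) * (lam i) ^ ((2 : ℝ) / 3)) / S ^ ((1 : ℝ) / 3) := by
    rw [Finset.sum_div]
    refine Finset.sum_congr rfl fun i _ => ?_
    rw [hu2 i, hvS i]
    ring
  have hA : ∑ i, (σ i) ^ ((4 : ℝ) / 3) * (lam i) ^ ((2 : ℝ) / 3) ≤ S ^ ((1 : ℝ) / 3) := by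
    rw [← div_le_one hSp, ← hsum_term]
    calc ∑ i, (u i) ^ 2 * v i ≤ ∑ i, (2 * (σ i) ^ 2 + (lam i) ^ 2 / S) / 3 :=
          Finset.sum_le_sum key
      _ = 1 := hsum_bound
  refine ⟨hA, hB, ?_, ?_⟩
  · intro h
    have hterms : ∀ i ∈ Finset.univ,
        (u i) ^ 2 * v i = (2 * (σ i) ^ 2 + (lam i) ^ 2 / S) / 3 := by
      rw [← Finset.sum_eq_sum_iff_of_le key]
      rw [hsum_term, h, div_self hSp.ne', hsum_bound]
    intro i
    have h1 := hterms i (Finset.mem_univ i)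
    rw [← hu3 i, ← hv3 i] at h1
    have h2 : u i = v i := (cube_amgm (hu i) (hvpos i)).2.1 (by linarith)
    exact Real.rpow_left_injOn (by norm_num : ((2 : ℝ) / 3) ≠ 0) (hσ i)
      (le_of_lt (div_pos (hlam i) hsqS)) h2
  · intro hc
    have huv : ∀ i, u i = v i := by
      intro i; rw [hudef, hvdef]; simp [hc i]
    have : ∑ i, (u i) ^ 2 * v i = 1 := by
      rw [← hsum_bound]
      refine Finset.sum_congr rfl fun i _ => ?_
      have h := (cube_amgm (hu i) (hvpos i)).2.2 (huv i)
      rw [hu3 i, hv3 i] at h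
      linarith
    rw [hsum_term] at this
    field_simp at this
    linarith [this]
end

section
/- Let x ∈ ℝ with x ≠ 0, and define S₃ : ℝ → ℝ by S₃(w) = 2w² − 3 (x²)^{2/3} (w²)^{2/3} (i.e. 2w² − 3x^{4/3}w^{4/3} with the real powers interpreted through squares). Then the set of global minimizers of S₃ over ℝ is exactly {x², −x²}, and the minimum value is −x⁴. -/
/-- for `x ≠ 0`, the set of global minimizers of the scalar
third-level cost `S₃(w) = 2w² − 3(x²)^{2/3}(w²)^{2/3}` is exactly `{x², −x²}`,
and the minimum value is `−x⁴`. -/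
theorem scalar_third_level_minimizers (x : ℝ) (hx : x ≠ 0) :
    {w : ℝ | ∀ v : ℝ,
        2 * w ^ 2 - 3 * (x ^ 2) ^ ((2 : ℝ) / 3) * (w ^ 2) ^ ((2 : ℝ) / 3) ≤
          2 * v ^ 2 - 3 * (x ^ 2) ^ ((2 : ℝ) / 3) * (v ^ 2) ^ ((2 : ℝ) / 3)} =
        ({x ^ 2, -x ^ 2} : Set ℝ) ∧
      2 * (x ^ 2) ^ 2 - 3 * (x ^ 2) ^ ((2 : ℝ) / 3) * ((x ^ 2) ^ 2) ^ ((2 : ℝ) / 3) =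
        -x ^ 4 := by
  have hx2 : (0:ℝ) < x ^ 2 := by positivity
  set a : ℝ := (x ^ 2) ^ ((2 : ℝ) / 3) with ha
  have ha0 : 0 < a := Real.rpow_pos_of_pos hx2 _
  -- a^3 = x^4
  have ha3 : a ^ 3 = x ^ 4 := by
    rw [ha, ← Real.rpow_natCast ((x ^ 2) ^ ((2:ℝ)/3)) 3, ← Real.rpow_mul hx2.le]
    rw [show ((2:ℝ)/3) * ((3:ℕ):ℝ) = ((2:ℕ):ℝ) by norm_num, Real.rpow_natCast]
    ring
  set t : ℝ → ℝ := fun v => (v ^ 2) ^ ((1 : ℝ) / 3) with ht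
  have ht0 : ∀ v, 0 ≤ t v := fun v => Real.rpow_nonneg (sq_nonneg v) _
  have ht2 : ∀ v, (t v) ^ 2 = (v ^ 2) ^ ((2 : ℝ) / 3) := by
    intro v
    rw [ht]
    rw [← Real.rpow_natCast ((v ^ 2) ^ ((1:ℝ)/3)) 2, ← Real.rpow_mul (sq_nonneg v)]
    norm_num
  have ht3 : ∀ v, (t v) ^ 3 = v ^ 2 := by
    intro v
    rw [ht]
    rw [← Real.rpow_natCast ((v ^ 2) ^ ((1:ℝ)/3)) 3, ← Real.rpow_mul (sq_nonneg v)]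
    norm_num
  -- S(v) rewritten
  have hS : ∀ v, 2 * v ^ 2 - 3 * a * (v ^ 2) ^ ((2 : ℝ) / 3)
      = 2 * (t v) ^ 3 - 3 * a * (t v) ^ 2 := by
    intro v; rw [ht2, ht3]
  -- lower bound
  have hlb : ∀ v, -(a ^ 3) ≤ 2 * (t v) ^ 3 - 3 * a * (t v) ^ 2 := by
    intro v
    nlinarith [sq_nonneg (t v - a), ht0 v, ha0.le, mul_nonneg (sq_nonneg (t v - a)) (ht0 v)]
  -- t of ±x² equals a
  have htx : ∀ w : ℝ, w ^ 2 = x ^ 4 → t w = a := by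
    intro w hw
    have h3 : (t w) ^ 3 = a ^ 3 := by rw [ht3, hw, ha3]
    rcases lt_trichotomy (t w) a with h | h | h
    · exact absurd h3 (ne_of_lt (pow_lt_pow_left₀ h (ht0 w) three_ne_zero))
    · exact h
    · exact absurd h3 (ne_of_gt (pow_lt_pow_left₀ h ha0.le three_ne_zero))
  have hminval : ∀ w : ℝ, w ^ 2 = x ^ 4 →
      2 * w ^ 2 - 3 * a * (w ^ 2) ^ ((2 : ℝ) / 3) = -x ^ 4 := by
    intro w hw
    rw [hS w, htx w hw, ← ha3]; ring
  constructor
  · ext w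
    simp only [Set.mem_setOf_eq, Set.mem_insert_iff, Set.mem_singleton_iff]
    constructor
    · intro hmin
      have hxx : (x ^ 2) ^ 2 = x ^ 4 := by ring
      have h1 := hmin (x ^ 2)
      rw [hminval (x ^ 2) hxx] at h1
      rw [hS w] at h1
      have hteq : t w = a := by
        rw [← ha3] at h1
        have hE : 2 * (t w) ^ 3 - 3 * a * (t w) ^ 2 + a ^ 3 = 0 :=
          le_antisymm (by linarith) (by linarith [hlb w])
        have hfac : (t w - a) ^ 2 * (2 * t w + a) = 0 := by linear_combination hE
        rcases mul_eq_zero.mp hfac with h | h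
        · have := pow_eq_zero_iff (two_ne_zero) |>.mp h
          linarith
        · linarith [ht0 w]
      have hw2 : w ^ 2 = x ^ 4 := by rw [← ht3 w, hteq, ha3]
      have : (w - x ^ 2) * (w + x ^ 2) = 0 := by nlinarith
      rcases mul_eq_zero.mp this with h | h
      · left; linarith
      · right; linarith
    · intro hw v
      have hw2 : w ^ 2 = x ^ 4 := by rcases hw with h | h <;> rw [h] <;> ring
      rw [hminval w hw2, hS v, ← ha3]
      exact hlb v
  · exact hminval (x ^ 2) (by ring)
end
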